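/- Suppose the code is a unitary RS-PDSSDC. Then for every k ∈ {1,…,K}, the N×N matrix A_k·A_kᴴ + B_k*·B_kᵀ is a diagonal matrix all of whose diagonal entries are strictly positive real numbers. -/

import Mathlib

open Matrix

noncomputable section

/-- A distributed code for `K` relays, with `N` information symbols and block length `T`:
precoding matrices `P, Q` used at the source, relay matrices `A k, B k` used at relay `k`,
and the noise-power constant `c > 0` entering the covariance matrix `R`. -/
structure DistCode (N T K : ℕ) where
  c : ℝ
  hc : 0 < c
  P : Matrix (Fin N) (Fin N) ℂ
  Q : Matrix (Fin N) (Fin N) ℂ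
  A : Fin K → Matrix (Fin N) (Fin T) ℂ
  B : Fin K → Matrix (Fin N) (Fin T) ℂ

/-- Entrywise complex conjugate of a matrix (`M*`). -/
def Matrix.cstar {m n : Type*} (M : Matrix m n ℂ) : Matrix m n ℂ :=
  M.map (starRingEnd ℂ)

namespace DistCode

variable {N T K : ℕ}

/-- The precoded vector `s̃ = s·P + s*·Q`. -/
def stilde (C : DistCode N T K) (s : Fin N → ℂ) : Fin N → ℂ :=
  Matrix.vecMul s C.P + Matrix.vecMul (fun n => starRingEnd ℂ (s n)) C.Q

/-- The codeword `X(h, s)`: its `k`-th row is `h_k·(s̃·A_k) + conj(h_k)·(s̃*·B_k)`. -/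
def codeword (C : DistCode N T K) (h : Fin K → ℂ) (s : Fin N → ℂ) :
    Matrix (Fin K) (Fin T) ℂ := fun k t =>
  h k * Matrix.vecMul (C.stilde s) (C.A k) t +
    starRingEnd ℂ (h k) * Matrix.vecMul (fun n => starRingEnd ℂ (C.stilde s n)) (C.B k) t

/-- The noise covariance matrix `R(g) = c·(Σ_k |g_k|²·(A_kᴴA_k + B_kᴴB_k)) + I_T`. -/
def Rmat (C : DistCode N T K) (g : Fin K → ℂ) : Matrix (Fin T) (Fin T) ℂ :=
  (C.c : ℂ) • (∑ k, (Complex.normSq (g k) : ℂ) •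
    ((C.A k)ᴴ * C.A k + (C.B k)ᴴ * C.B k)) + 1

/-- The (whitened) Gram matrix `X(h,s)·R(g)⁻¹·X(h,s)ᴴ`. -/
def gram (C : DistCode N T K) (g h : Fin K → ℂ) (s : Fin N → ℂ) :
    Matrix (Fin K) (Fin K) ℂ :=
  C.codeword h s * (C.Rmat g)⁻¹ * (C.codeword h s)ᴴ

/-- Condition (a) of the PDSSDC definition: each entry of the codeword is identically `0`,
`ε·h_k·s̃_n` or `ε·conj(h_k)·conj(s̃_n)` for some `ε ∈ {1, −1, i, −i}` and some `n`. -/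
def CondA (C : DistCode N T K) : Prop :=
  ∀ (k : Fin K) (t : Fin T),
    (∀ h s, C.codeword h s k t = 0) ∨
    ∃ ε ∈ ({1, -1, Complex.I, -Complex.I} : Set ℂ), ∃ n : Fin N,
      (∀ h s, C.codeword h s k t = ε * h k * C.stilde s n) ∨
      (∀ h s, C.codeword h s k t =
        ε * starRingEnd ℂ (h k) * starRingEnd ℂ (C.stilde s n))

/-- Condition (b) of the PDSSDC definition: for every `g` the Gram matrix decomposes as
`Σ_n W_n(x_{nI}, x_{nQ}, h)` where the `(k,k)` entry of `W_n` is
`|h_k|²·(v¹_{n,k}·x_{nI}² + v²_{n,k}·x_{nQ}²)`. -/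
def CondB (C : DistCode N T K) : Prop :=
  ∀ g : Fin K → ℂ,
    ∃ W : Fin N → ℝ → ℝ → (Fin K → ℂ) → Matrix (Fin K) (Fin K) ℂ,
    ∃ v1 v2 : Fin N → Fin K → ℝ,
      ∀ (h : Fin K → ℂ) (s : Fin N → ℂ),
        C.gram g h s = (∑ n, W n (s n).re (s n).im h) ∧
        ∀ (n : Fin N) (k : Fin K),
          W n (s n).re (s n).im h k k =
            ((Complex.normSq (h k) *
              (v1 n k * (s n).re ^ 2 + v2 n k * (s n).im ^ 2) : ℝ) : ℂ)

/-- A Precoded Distributed Single-Symbol Decodable STBC. -/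
def IsPDSSDC (C : DistCode N T K) : Prop := C.CondA ∧ C.CondB

/-- Rows `k` and `k'` are `R`-non-orthogonal if the `(k,k')` entry of the Gram matrix is not
identically zero as a function of `(g, h, s)`. -/
def RNonOrth (C : DistCode N T K) (k k' : Fin K) : Prop :=
  ¬ ∀ g h s, C.gram g h s k k' = 0

/-- Semi-orthogonality: every row is `R`-non-orthogonal to at most one other row. -/
def SemiOrth (C : DistCode N T K) : Prop :=
  ∀ k k₁ k₂ : Fin K, k₁ ≠ k → k₂ ≠ k →
    C.RNonOrth k k₁ → C.RNonOrth k k₂ → k₁ = k₂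

end DistCode

/-- A matrix is row monomial if every row has at most one nonzero entry. -/
def Matrix.RowMonomial {m n : Type*} (M : Matrix m n ℂ) : Prop :=
  ∀ i j j', M i j ≠ 0 → M i j' ≠ 0 → j = j'

/-- A matrix is column monomial if every column has at most one nonzero entry. -/
def Matrix.ColMonomial {m n : Type*} (M : Matrix m n ℂ) : Prop :=
  ∀ j i i', M i j ≠ 0 → M i' j ≠ 0 → i = i'

namespace DistCode

variable {N T K : ℕ}

/-- Row monomial code: each relay matrix `A_k`, `B_k` is row monomial. -/
def RowMonomialCode (C : DistCode N T K) : Prop :=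
  ∀ k, (C.A k).RowMonomial ∧ (C.B k).RowMonomial

/-- The weight matrix of `x_{nI}`: `Φ_{nI}(h) = X(h, eₙ)`. -/
def PhiI (C : DistCode N T K) (n : Fin N) (h : Fin K → ℂ) : Matrix (Fin K) (Fin T) ℂ :=
  C.codeword h (Pi.single n 1)

/-- The weight matrix of `x_{nQ}`: `Φ_{nQ}(h) = X(h, i·eₙ)`. -/
def PhiQ (C : DistCode N T K) (n : Fin N) (h : Fin K → ℂ) : Matrix (Fin K) (Fin T) ℂ :=
  C.codeword h (Pi.single n Complex.I)

/-- Unitary code: for every channel vector `h` with nonzero entries, the matrices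
`Φ_{nI}(h)·Φ_{nI}(h)ᴴ` and `Φ_{nQ}(h)·Φ_{nQ}(h)ᴴ` are diagonal with strictly positive
(real) diagonal entries. -/
def Unitary (C : DistCode N T K) : Prop :=
  ∀ h : Fin K → ℂ, (∀ k, h k ≠ 0) → ∀ n : Fin N,
    ((C.PhiI n h * (C.PhiI n h)ᴴ).IsDiag ∧
      ∀ k, 0 < ((C.PhiI n h * (C.PhiI n h)ᴴ) k k).re ∧
        ((C.PhiI n h * (C.PhiI n h)ᴴ) k k).im = 0) ∧
    ((C.PhiQ n h * (C.PhiQ n h)ᴴ).IsDiag ∧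
      ∀ k, 0 < ((C.PhiQ n h * (C.PhiQ n h)ᴴ) k k).re ∧
        ((C.PhiQ n h * (C.PhiQ n h)ᴴ) k k).im = 0)

/-- A unitary row-monomial semi-orthogonal PDSSDC (unitary RS-PDSSDC). -/
def IsUnitaryRSPDSSDC (C : DistCode N T K) : Prop :=
  C.IsPDSSDC ∧ C.SemiOrth ∧ C.RowMonomialCode ∧ C.Unitary

end DistCode

/-!
Fix a relay `k`. Testing condition (a) at `h_k = 1` and `h_k = i` separates the two summands of
each codeword entry: column `t` contributes to row `k` either `ε_t h_k s̃_{ν t}` or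
`ε_t conj(h_k) conj(s̃_{ν t})`, so `(XXᴴ)_{kk} = |h_k|² Σ_t |ε_t|² |s̃_{ν t}|²`. Condition (b) at
`g = 0` (where `R = I`) rewrites this as `|h_k|² Σ_n (v¹_n x_{nI}² + v²_n x_{nQ}²)`, and unitarity
makes every `v¹_n, v²_n` positive. Hence `s ↦ s̃` is an injective, hence bijective, `ℝ`-linear
map, so the identities between columns that hold on its range hold everywhere: column `t` of
`A_k` and of `B_k` is `ε_t e_{ν t}` and `0`, or the other way round. Then
`A_k A_kᴴ + B_k* B_kᵀ = diag_n (Σ_{ν t = n} |ε_t|²)`, and its entries are positive because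
`e_n = s̃(s)` for some `s ≠ 0`.
-/

open ComplexConjugate

theorem Complex.eq_and_eq_of_forall_mul_add_conj_mul {a b a' b' : ℂ}
    (h : ∀ z : ℂ, z * a + conj z * b = z * a' + conj z * b') : a = a' ∧ b = b' := by
  have h1 := h 1
  have hI := h Complex.I
  simp only [map_one, one_mul, Complex.conj_I] at h1 hI
  have h2I : (2 * Complex.I : ℂ) ≠ 0 := by simp
  constructor
  · exact mul_left_cancel₀ h2I (by linear_combination Complex.I * h1 + hI)
  · exact mul_left_cancel₀ h2I (by linear_combination Complex.I * h1 - hI)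

section ReImForm

variable {ι : Type*} [Fintype ι]

def reImForm (v₁ v₂ : ι → ℝ) (s : ι → ℂ) : ℝ :=
  ∑ n, (v₁ n * (s n).re ^ 2 + v₂ n * (s n).im ^ 2)

theorem reImForm_single_one [DecidableEq ι] (v₁ v₂ : ι → ℝ) (n : ι) :
    reImForm v₁ v₂ (Pi.single n 1) = v₁ n := by
  rw [reImForm, Finset.sum_eq_single n (fun m _ hm => by simp [hm]) (by simp)]
  simp

theorem reImForm_single_I [DecidableEq ι] (v₁ v₂ : ι → ℝ) (n : ι) :
    reImForm v₁ v₂ (Pi.single n Complex.I) = v₂ n := by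
  rw [reImForm, Finset.sum_eq_single n (fun m _ hm => by simp [hm]) (by simp)]
  simp

theorem reImForm_pos {v₁ v₂ : ι → ℝ} (h₁ : ∀ n, 0 < v₁ n) (h₂ : ∀ n, 0 < v₂ n)
    {s : ι → ℂ} (hs : s ≠ 0) : 0 < reImForm v₁ v₂ s := by
  obtain ⟨n, hn⟩ := Function.ne_iff.mp hs
  have hterm : ∀ m, 0 ≤ v₁ m * (s m).re ^ 2 + v₂ m * (s m).im ^ 2 := fun m => by
    have := h₁ m; have := h₂ m; positivity
  refine Finset.sum_pos' (fun m _ => hterm m) ⟨n, Finset.mem_univ n, ?_⟩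
  have hri : (s n).re ≠ 0 ∨ (s n).im ≠ 0 := by
    by_contra! h0
    exact hn (Complex.ext h0.1 h0.2)
  rcases hri with hre | him
  · have := h₁ n; have := h₂ n; positivity
  · have := h₁ n; have := h₂ n; positivity
end ReImForm

section MonomialPair

variable {ι : Type*} [DecidableEq ι]

def IsMonomialPair (a b : ι → ℂ) (ε : ℂ) (ν : ι) : Prop :=
  a = Pi.single ν ε ∧ b = 0 ∨ a = 0 ∧ b = Pi.single ν ε

variable {a b : ι → ℂ} {ε : ℂ} {ν : ι}

theorem IsMonomialPair.normSq_mul_add_conj_mul [Fintype ι] (hp : IsMonomialPair a b ε ν) (z : ℂ)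
    (u : ι → ℂ) :
    Complex.normSq (z * (u ⬝ᵥ a) + conj z * (star u ⬝ᵥ b)) =
      Complex.normSq z * (Complex.normSq ε * Complex.normSq (u ν)) := by
  rcases hp with ⟨rfl, rfl⟩ | ⟨rfl, rfl⟩ <;>
    simp [dotProduct_single, Complex.normSq_mul, mul_comm]

theorem IsMonomialPair.mul_conj_add_conj_mul (hp : IsMonomialPair a b ε ν) (m m' : ι) :
    a m * conj (a m') + conj (b m) * b m' = diagonal (Pi.single ν (Complex.normSq ε : ℂ)) m m' := by
  rcases hp with ⟨rfl, rfl⟩ | ⟨rfl, rfl⟩ <;>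
  · by_cases hm : m = ν <;> by_cases hm' : m' = ν <;>
      simp [diagonal, Pi.single_apply, hm, hm', eq_comm (a := ν), Complex.mul_conj, mul_comm]

end MonomialPair

namespace DistCode

variable {N T K : ℕ} (C : DistCode N T K)

theorem codeword_apply (h : Fin K → ℂ) (s : Fin N → ℂ) (k : Fin K) (t : Fin T) :
    C.codeword h s k t = h k * (C.stilde s ⬝ᵥ (C.A k).col t) +
      conj (h k) * (star (C.stilde s) ⬝ᵥ (C.B k).col t) := rfl

def stildeₗ : (Fin N → ℂ) →ₗ[ℝ] (Fin N → ℂ) where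
  toFun := C.stilde
  map_add' x y := by
    funext m
    simp only [stilde, vecMul, dotProduct, Pi.add_apply, map_add, add_mul,
      Finset.sum_add_distrib]
    ring
  map_smul' r x := by
    funext m
    simp only [stilde, vecMul, dotProduct, Pi.smul_apply, Complex.real_smul, map_mul,
      Complex.conj_ofReal, RingHom.id_apply, Pi.add_apply, mul_assoc, ← Finset.mul_sum,
      mul_add]

theorem stilde_surjective_of_eq_zero (h : ∀ s, C.stilde s = 0 → s = 0) :
    Function.Surjective C.stilde :=
  LinearMap.injective_iff_surjective.mp <| (injective_iff_map_eq_zero C.stildeₗ).mpr h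

/-- Row `k` of the codeword in the normal form given by condition (a): column `t` is realised
by the monomial pair `(a t, b t)`, with `ε t = 0` for an identically zero entry. -/
structure RowForm (k : Fin K) where
  a : Fin T → Fin N → ℂ
  b : Fin T → Fin N → ℂ
  ε : Fin T → ℂ
  ν : Fin T → Fin N
  isMonomialPair : ∀ t, IsMonomialPair (a t) (b t) (ε t) (ν t)
  codeword_apply : ∀ h s t, C.codeword h s k t =
    h k * (C.stilde s ⬝ᵥ a t) + conj (h k) * (star (C.stilde s) ⬝ᵥ b t)

variable {C}

theorem CondA.nonempty_rowForm (hA : C.CondA) (hN : 0 < N) (k : Fin K) :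
    Nonempty (C.RowForm k) := by
  have hcol : ∀ t, ∃ a b ε ν, IsMonomialPair a b ε ν ∧ ∀ h s, C.codeword h s k t =
      h k * (C.stilde s ⬝ᵥ a) + conj (h k) * (star (C.stilde s) ⬝ᵥ b) := by
    intro t
    rcases hA k t with h0 | ⟨ε, -, ν, hX | hX⟩
    · exact ⟨0, 0, 0, ⟨0, hN⟩, .inl ⟨Pi.single_zero _ |>.symm, rfl⟩, by simpa using h0⟩
    · refine ⟨Pi.single ν ε, 0, ε, ν, .inl ⟨rfl, rfl⟩, fun h s => ?_⟩
      rw [hX, dotProduct_single]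
      simp only [dotProduct_zero, mul_zero, add_zero]
      ring
    · refine ⟨0, Pi.single ν ε, ε, ν, .inr ⟨rfl, rfl⟩, fun h s => ?_⟩
      rw [hX, dotProduct_single, Pi.star_apply, Complex.star_def]
      simp only [dotProduct_zero, mul_zero, zero_add]
      ring
  choose a b ε ν hpair hX using hcol
  exact ⟨⟨a, b, ε, ν, hpair, fun h s t => hX t h s⟩⟩

theorem Rmat_zero : C.Rmat 0 = 1 := by simp [Rmat]

theorem CondB.exists_reImForm (hB : C.CondB) (k : Fin K) :
    ∃ v₁ v₂ : Fin N → ℝ, ∀ h s, (C.codeword h s * (C.codeword h s)ᴴ) k k =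
      (Complex.normSq (h k) * reImForm v₁ v₂ s : ℝ) := by
  obtain ⟨W, v₁, v₂, hW⟩ := hB 0
  refine ⟨fun n => v₁ n k, fun n => v₂ n k, fun h s => ?_⟩
  obtain ⟨hsum, hdiag⟩ := hW h s
  have hgram : C.gram 0 h s = C.codeword h s * (C.codeword h s)ᴴ := by
    rw [gram, Rmat_zero, inv_one, Matrix.mul_one]
  rw [← hgram, hsum, Matrix.sum_apply]
  simp only [hdiag, reImForm, Finset.mul_sum, Complex.ofReal_sum]

namespace RowForm

variable {k : Fin K} (F : C.RowForm k)

def energy (u : Fin N → ℂ) : ℝ :=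
  ∑ t, Complex.normSq (F.ε t) * Complex.normSq (u (F.ν t))

theorem codeword_mul_conjTranspose_apply_self (h : Fin K → ℂ) (s : Fin N → ℂ) :
    (C.codeword h s * (C.codeword h s)ᴴ) k k =
      (Complex.normSq (h k) * F.energy (C.stilde s) : ℝ) := by
  simp only [mul_apply, conjTranspose_apply, energy, Finset.mul_sum, Complex.ofReal_sum]
  refine Finset.sum_congr rfl fun t _ => ?_
  rw [Complex.star_def, Complex.mul_conj, F.codeword_apply,
    (F.isMonomialPair t).normSq_mul_add_conj_mul]

theorem energy_stilde_pos (hB : C.CondB) (hU : C.Unitary) {s : Fin N → ℂ} (hs : s ≠ 0) :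
    0 < F.energy (C.stilde s) := by
  obtain ⟨v₁, v₂, hv⟩ := hB.exists_reImForm k
  have hform : ∀ s, F.energy (C.stilde s) = reImForm v₁ v₂ s := fun s => by
    simpa using (F.codeword_mul_conjTranspose_apply_self 1 s).symm.trans (hv 1 s)
  have hpos : ∀ n, 0 < v₁ n ∧ 0 < v₂ n := fun n => by
    obtain ⟨⟨-, hI⟩, ⟨-, hQ⟩⟩ := hU 1 (fun _ => one_ne_zero) n
    have h₁ := (hI k).1
    have h₂ := (hQ k).1
    rw [PhiI, hv, reImForm_single_one] at h₁
    rw [PhiQ, hv, reImForm_single_I] at h₂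
    simp only [Pi.one_apply, map_one, one_mul, Complex.ofReal_re] at h₁ h₂
    exact ⟨h₁, h₂⟩
  rw [hform]
  exact reImForm_pos (fun n => (hpos n).1) (fun n => (hpos n).2) hs

theorem stilde_surjective (F : C.RowForm k) (hB : C.CondB) (hU : C.Unitary) :
    Function.Surjective C.stilde :=
  C.stilde_surjective_of_eq_zero fun s hs => by
    by_contra hne
    have hpos := F.energy_stilde_pos hB hU hne
    simp [hs, energy] at hpos

theorem col_eq (hsurj : Function.Surjective C.stilde) (t : Fin T) :
    (C.A k).col t = F.a t ∧ (C.B k).col t = F.b t := by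
  have hdot : ∀ s, C.stilde s ⬝ᵥ (C.A k).col t = C.stilde s ⬝ᵥ F.a t ∧
      star (C.stilde s) ⬝ᵥ (C.B k).col t = star (C.stilde s) ⬝ᵥ F.b t := fun s =>
    Complex.eq_and_eq_of_forall_mul_add_conj_mul fun z => by
      simpa only [DistCode.codeword_apply] using F.codeword_apply (fun _ => z) s t
  constructor
  · refine dotProduct_eq _ _ fun u => ?_
    obtain ⟨s, rfl⟩ := hsurj u
    rw [dotProduct_comm, (hdot s).1, dotProduct_comm]
  · refine dotProduct_eq _ _ fun u => ?_
    obtain ⟨s, hs⟩ := hsurj (star u)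
    rw [← star_star u, ← hs, dotProduct_comm, (hdot s).2, dotProduct_comm]

theorem relayGram_eq (hsurj : Function.Surjective C.stilde) :
    C.A k * (C.A k)ᴴ + (C.B k).cstar * (C.B k)ᵀ =
      diagonal fun n => (F.energy (Pi.single n 1) : ℂ) := by
  ext m m'
  have hterm : ∀ t, C.A k m t * conj (C.A k m' t) + conj (C.B k m t) * C.B k m' t =
      diagonal (Pi.single (F.ν t) (Complex.normSq (F.ε t) : ℂ)) m m' := fun t => by
    obtain ⟨hA, hB⟩ := F.col_eq hsurj t
    rw [← col_apply (C.A k), ← col_apply (C.A k), ← col_apply (C.B k), ← col_apply (C.B k),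
      hA, hB]
    exact (F.isMonomialPair t).mul_conj_add_conj_mul m m'
  rw [Matrix.add_apply, mul_apply, mul_apply, ← Finset.sum_add_distrib]
  calc _ = ∑ t, diagonal (Pi.single (F.ν t) (Complex.normSq (F.ε t) : ℂ)) m m' :=
        Finset.sum_congr rfl fun t _ => hterm t
    _ = _ := by
      by_cases h : m = m' <;> simp [h, energy, Pi.single_apply, eq_comm, apply_ite]

theorem energy_single_pos (hB : C.CondB) (hU : C.Unitary) (n : Fin N) :
    0 < F.energy (Pi.single n 1) := by
  obtain ⟨s, hs⟩ := F.stilde_surjective hB hU (Pi.single n 1)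
  have hs0 : s ≠ 0 := by
    rintro rfl
    simpa using congrFun (hs.symm.trans (map_zero C.stildeₗ)) n
  exact hs ▸ F.energy_stilde_pos hB hU hs0

end RowForm

end DistCode

theorem statement7_general {N T K : ℕ} (hN : 0 < N)
    (C : DistCode N T K) (hC : C.IsUnitaryRSPDSSDC) (k : Fin K) :
    (C.A k * (C.A k)ᴴ + (C.B k).cstar * (C.B k)ᵀ).IsDiag ∧
    ∀ n : Fin N,
      0 < ((C.A k * (C.A k)ᴴ + (C.B k).cstar * (C.B k)ᵀ) n n).re ∧
      ((C.A k * (C.A k)ᴴ + (C.B k).cstar * (C.B k)ᵀ) n n).im = 0 := by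
  obtain ⟨⟨hA, hB⟩, -, -, hU⟩ := hC
  obtain ⟨F⟩ := hA.nonempty_rowForm hN k
  rw [F.relayGram_eq (F.stilde_surjective hB hU)]
  exact ⟨isDiag_diagonal _, fun n => by simpa using F.energy_single_pos hB hU n⟩

/-- Equation (14) of the paper. For a unitary RS-PDSSDC, each matrix
`A_k·A_kᴴ + B_k*·B_kᵀ` is diagonal with strictly positive real diagonal entries. -/
theorem statement7 {N T K : ℕ} (hN : 0 < N) (hT : 0 < T) (hK : 0 < K)
    (C : DistCode N T K) (hC : C.IsUnitaryRSPDSSDC) (k : Fin K) :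
    (C.A k * (C.A k)ᴴ + (C.B k).cstar * (C.B k)ᵀ).IsDiag ∧
    ∀ n : Fin N,
      0 < ((C.A k * (C.A k)ᴴ + (C.B k).cstar * (C.B k)ᵀ) n n).re ∧
      ((C.A k * (C.A k)ᴴ + (C.B k).cstar * (C.B k)ᵀ) n n).im = 0 :=
  statement7_general hN C hC k
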